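/- arXiv:2104.10821 — 7 statements merged into one kernel-verified Lean document; each statement's English description precedes it below -/
import Mathlib

section
/- For ε ∈ {0,1}, r ≥ 1, M ∈ ε + 2ℕ, a_* ∈ 𝔖_r^M, and t ≥ a_M, the sequence a_*^{!t} (obtained from 0,0,1,1,...,t,t by removing two entries t - a for each value a appearing twice in a_*, and one entry t - a for each value a appearing exactly once) has M' = 2(t+1) - M entries whose sum equals r + (M'² - 2M' + ε)/4, i.e., a_*^{!t} ∈ 𝔖_r^{M'}. -/
/-- 𝔗_r^m : strictly increasing length-m sequences of naturals summing to r + m(m-1)/2. -/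
def TT (r m : ℕ) : Set (List ℕ) :=
  {l | l.length = m ∧ l.Pairwise (· < ·) ∧ l.sum = r + m * (m - 1) / 2}

/-- Complement of `l` in `{0,1,...,t}`: remove `t - a` for each entry `a` of `l`. -/
def complA (t : ℕ) (l : List ℕ) : List ℕ :=
  (List.range (t + 1)).filter (fun x => decide ((t - x) ∉ l))

/-- 𝔖_r^M (for given ε): weakly increasing length-M sequences, each value occurring
at most twice, with sum r + (M² - 2M + ε)/4. -/
def SS (r M ε : ℕ) : Set (List ℕ) :=
  {l | l.length = M ∧ l.Pairwise (· ≤ ·) ∧ (∀ x, l.count x ≤ 2) ∧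
    l.sum = r + (M ^ 2 - 2 * M + ε) / 4}

/-- Complement of `l` in the multiset `{0,0,1,1,...,t,t}`, as a sorted list. -/
def complB (t : ℕ) (l : List ℕ) : List ℕ :=
  (List.range (t + 1)).flatMap (fun x => List.replicate (2 - l.count (t - x)) x)

/-- Subtract 1 from each of the last `k` entries. -/
def decLast (k : ℕ) (l : List ℕ) : List ℕ :=
  l.take (l.length - k) ++ (l.drop (l.length - k)).map (fun x => x - 1)

def InducedT (r : ℕ) (l l' : List ℕ) : Prop :=
  ∃ k₀, 1 ≤ k₀ ∧ k₀ ≤ r ∧ decLast k₀ l ∈ TT (r - k₀) l.length ∧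
    decLast k₀ l' ∈ TT (r - k₀) l'.length

def InducedS (r ε : ℕ) (l l' : List ℕ) : Prop :=
  ∃ k₀, 1 ≤ k₀ ∧ k₀ ≤ r ∧ decLast k₀ l ∈ SS (r - k₀) l.length ε ∧
    decLast k₀ l' ∈ SS (r - k₀) l'.length ε

def shA (l : List ℕ) : List ℕ := 0 :: l.map (· + 1)
def shS (l : List ℕ) : List ℕ := 0 :: 0 :: l.map (· + 1)

def EquivA (l l' : List ℕ) : Prop := ∃ i j, shA^[i] l = shA^[j] l'
def EquivS (l l' : List ℕ) : Prop := ∃ i j, shS^[i] l = shS^[j] l'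

def PairEquivA (p q : List ℕ × List ℕ) : Prop :=
  ∃ i j, shA^[i] p.1 = shA^[j] q.1 ∧ shA^[i] p.2 = shA^[j] q.2
def PairEquivS (p q : List ℕ × List ℕ) : Prop :=
  ∃ i j, shS^[i] p.1 = shS^[j] q.1 ∧ shS^[i] p.2 = shS^[j] q.2

/-- The pattern: entries (a, a+p) in `l` and (a+1, a+p-1) in `l'` at the same
consecutive positions, all other entries equal. -/
def PairP (p : ℕ) (l l' : List ℕ) : Prop :=
  ∃ a u v, l = u ++ [a, a + p] ++ v ∧ l' = u ++ [a + 1, a + p - 1] ++ v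

/-- (b, b+2, b+3, ..., b+p-2, b+p) -/
def listA (p b : ℕ) : List ℕ :=
  (b :: (List.range (p - 3)).map (fun i => b + 2 + i)) ++ [b + p]
/-- (b+1, b+2, ..., b+p-1) -/
def listA' (p b : ℕ) : List ℕ :=
  (List.range (p - 1)).map (fun i => b + 1 + i)

/-- (b, b+1, b+2, b+2, ..., b+p-2, b+p-2, b+p-1, b+p) -/
def listB (p b : ℕ) : List ℕ :=
  b :: (b + 1) :: ((List.range (p - 3)).flatMap fun i => [b + 2 + i, b + 2 + i]) ++
    [b + p - 1, b + p]
/-- (b+1, b+1, b+2, b+2, ..., b+p-1, b+p-1) -/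
def listB' (p b : ℕ) : List ℕ :=
  (List.range (p - 1)).flatMap fun i => [b + 1 + i, b + 1 + i]

/-- The multiset of parts (a_i - i), zero parts removed. -/
def partsOf (l : List ℕ) : Multiset ℕ :=
  ↑((l.zipIdx.map fun p => p.1 - p.2).filter fun x => decide (x ≠ 0))

/-- Conjugate (transpose) of a multiset of parts. -/
def conjParts (s : Multiset ℕ) : Multiset ℕ :=
  Multiset.filter (fun x => x ≠ 0)
    ↑((List.range s.sum).map fun j => Multiset.card (Multiset.filter (fun x => j + 1 ≤ x) s))

/-! With multiplicities, `complB t l` together with the reflected list `t - l` is a rearrangement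
of `0, 0, 1, 1, …, t, t`. Comparing lengths gives `M' = 2(t + 1) - M`, comparing sums gives
`Σ complB t l + t M = t (t + 1) + Σ l`, and for `M ≡ ε (mod 2)` the offsets `⌊(M² - 2M + ε)/4⌋`
differ by exactly `t (t + 1 - M)`. -/

theorem count_complB (t x : ℕ) (l : List ℕ) :
    (complB t l).count x = if x ≤ t then 2 - l.count (t - x) else 0 := by
  simp only [complB, List.count_flatMap, List.count_replicate, Function.comp_def, beq_iff_eq]
  rw [← List.sum_toFinset _ List.nodup_range, List.toFinset_range, Finset.sum_ite_eq']
  simp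

theorem complB_pairwise_le (t : ℕ) (l : List ℕ) : (complB t l).Pairwise (· ≤ ·) := by
  refine List.pairwise_flatMap.2 ⟨fun _ _ => List.pairwise_replicate.2 (Or.inr le_rfl), ?_⟩
  refine List.pairwise_lt_range.imp fun hxy a ha b hb => ?_
  rw [List.eq_of_mem_replicate ha, List.eq_of_mem_replicate hb]
  exact hxy.le

theorem count_map_tsub {t : ℕ} {l : List ℕ} (hl : ∀ a ∈ l, a ≤ t) (x : ℕ) :
    (l.map (t - ·)).count x = if x ≤ t then l.count (t - x) else 0 := by
  rw [List.count_eq_countP, List.countP_map]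
  split_ifs with hx
  · rw [List.count_eq_countP]
    refine List.countP_congr fun a ha => ?_
    have := hl a ha
    simp only [Function.comp_apply, beq_iff_eq]
    omega
  · refine List.countP_eq_zero.2 fun a ha => ?_
    have := hl a ha
    simp only [Function.comp_apply, beq_iff_eq]
    omega

theorem complB_append_map_tsub_perm {t : ℕ} {l : List ℕ} (hcount : ∀ x, l.count x ≤ 2)
    (hl : ∀ a ∈ l, a ≤ t) :
    (complB t l ++ l.map (t - ·)).Perm (List.range (t + 1) ++ List.range (t + 1)) := by
  refine List.perm_iff_count.2 fun x => ?_
  rw [List.count_append, List.count_append, count_complB, count_map_tsub hl, List.count_range]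
  have := hcount (t - x)
  split_ifs <;> omega

theorem sum_map_tsub_add_sum {t : ℕ} {l : List ℕ} (hl : ∀ a ∈ l, a ≤ t) :
    (l.map (t - ·)).sum + l.sum = t * l.length := by
  induction l with
  | nil => rfl
  | cons a l ih =>
    rw [List.forall_mem_cons] at hl
    have := ih hl.2
    rw [List.map_cons, List.sum_cons, List.sum_cons, List.length_cons, mul_add_one]
    omega

theorem sum_range_succ_mul_two (n : ℕ) : (List.range (n + 1)).sum * 2 = (n + 1) * n := by
  induction n with
  | zero => rfl
  | succ n ih =>
    rw [List.range_succ, List.sum_append, List.sum_singleton, add_mul, ih]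
    ring

theorem sq_sub_two_mul_add_div_four {ε : ℕ} (hε : ε ≤ 1) (n : ℕ) :
    ((ε + 2 * n) ^ 2 - 2 * (ε + 2 * n) + ε) / 4 = n ^ 2 + ε * n - n := by
  interval_cases ε
  · rw [show (0 + 2 * n) ^ 2 = 4 * n ^ 2 by ring]
    omega
  · rw [show (1 + 2 * n) ^ 2 = 4 * n ^ 2 + 4 * n + 1 by ring]
    omega

theorem sq_sub_two_mul_add_div_four_add_mul {ε M M' t : ℕ} (hε : ε ≤ 1)
    (hM : ∃ n, M = ε + 2 * n) (hMM' : M + M' = 2 * (t + 1)) :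
    (M' ^ 2 - 2 * M' + ε) / 4 + t * M = (M ^ 2 - 2 * M + ε) / 4 + t * (t + 1) := by
  obtain ⟨n, rfl⟩ := hM
  obtain ⟨n', rfl⟩ : ∃ n', M' = ε + 2 * n' := ⟨t + 1 - n - ε, by omega⟩
  have h : n + n' + ε = t + 1 := by omega
  rw [sq_sub_two_mul_add_div_four hε, sq_sub_two_mul_add_div_four hε]
  have hn : n ≤ n ^ 2 + ε * n := le_add_right (Nat.le_self_pow two_ne_zero n)
  have hn' : n' ≤ n' ^ 2 + ε * n' := le_add_right (Nat.le_self_pow two_ne_zero n')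
  zify [hn, hn'] at h ⊢
  linear_combination ((t : ℤ) - n + n') * h

theorem stmt3_general (r M t ε : ℕ) (hε : ε ≤ 1) (hM : ∃ n, M = ε + 2 * n)
    (l : List ℕ) (hl : l ∈ SS r M ε) (ht : ∀ x ∈ l, x ≤ t) :
    complB t l ∈ SS r (2 * (t + 1) - M) ε := by
  obtain ⟨hlen, -, hcount, hsum⟩ := hl
  have hperm := complB_append_map_tsub_perm hcount ht
  have hlenB : (complB t l).length + M = 2 * (t + 1) := by
    simpa [hlen, two_mul] using hperm.length_eq
  have hsumB : (complB t l).sum + t * M = t * (t + 1) + l.sum := by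
    have hrange := sum_range_succ_mul_two t
    have hreflect := sum_map_tsub_add_sum ht
    rw [hlen] at hreflect
    have hsums := hperm.sum_eq
    rw [List.sum_append, List.sum_append] at hsums
    linarith
  have hoffset :=
    sq_sub_two_mul_add_div_four_add_mul (M' := 2 * (t + 1) - M) (t := t) hε hM (by omega)
  refine ⟨by omega, complB_pairwise_le t l, fun x => ?_, by omega⟩
  rw [count_complB]
  split_ifs <;> omega

theorem stmt3 (r M t ε : ℕ) (hε : ε ≤ 1) (hr : 1 ≤ r) (hM : ∃ n, M = ε + 2 * n)
    (l : List ℕ) (hl : l ∈ SS r M ε) (ht : ∀ x ∈ l, x ≤ t) :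
    complB t l ∈ SS r (2 * (t + 1) - M) ε :=
  stmt3_general r M t ε hε hM l hl ht
end

section
/- Let p ≥ 4, and suppose (a_*, a'_*) ∈ 𝔗_r^m × 𝔗_r^m is a pair such that for some k and some a: (a_k, a_{k+1}) = (a, a+p), (a'_k, a'_{k+1}) = (a+1, a+p-1), and a_s = a'_s for all s ≠ k, k+1. Then for t ≥ max(a_m, a'_m), the pair of complements (a'_*^{!t}, a_*^{!t}) satisfies: for some index k' and some value b, the entries of a'_*^{!t} from position k' to k'+p-2 are (b, b+2, b+3, ..., b+p-3, b+p-2, b+p), the corresponding entries of a_*^{!t} are (b+1, b+2, ..., b+p-2, b+p-1), and the two complement sequences agree in all other positions. -/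
/-! Write `l = u ++ [a, a + p] ++ v` and `l' = u ++ [a + 1, a + p - 1] ++ v`. Since `l` is
increasing, `u` lies below `a` and `v` above `a + p`, so under `x ↦ t - x` the range `{0, …, t}`
splits into three blocks: the outer ones only see `v` and `u` and are common to both complements,
while the window `[b, b + p]`, `b = t - (a + p)`, loses its two endpoints for `l` and the points
`b + 1`, `b + p - 1` for `l'`, which leaves exactly `listA' p b` and `listA p b`. -/

open List

theorem List.Pairwise.bounds_of_append_pair {α : Type*} {R : α → α → Prop} {u v : List α} {x y : α}
    (h : (u ++ [x, y] ++ v).Pairwise R) : (∀ z ∈ u, R z x) ∧ ∀ z ∈ v, R y z := by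
  rw [append_assoc, pairwise_append, pairwise_append] at h
  exact ⟨fun z hz => h.2.2 z hz x (by simp), fun z hz => h.2.1.2.2 y (by simp) z hz⟩

theorem complA_append_append {t a p : ℕ} {u w v : List ℕ} (hap : a + p ≤ t)
    (hu : ∀ x ∈ u, x < a) (hw : ∀ x ∈ w, a ≤ x ∧ x ≤ a + p) (hv : ∀ x ∈ v, a + p < x) :
    complA t (u ++ w ++ v) =
      (range' 0 (t - (a + p))).filter (fun x => t - x ∉ v) ++
      (range' (t - (a + p)) (p + 1)).filter (fun x => t - x ∉ w) ++
      (range' (t - a + 1) a).filter (fun x => t - x ∉ u) := by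
  have hrange : range (t + 1) =
      range' 0 (t - (a + p)) ++ range' (t - (a + p)) (p + 1) ++ range' (t - a + 1) a := by
    rw [range_eq_range', show t + 1 = t - (a + p) + (p + 1) + a by omega,
      show t - a + 1 = 0 + (t - (a + p) + (p + 1)) by omega, ← range'_append_1,
      ← range'_append_1, zero_add]
  rw [complA, hrange, filter_append, filter_append]
  congr 1; congr 1
  all_goals
    refine filter_congr fun x hx => decide_eq_decide.2 ?_
    have := hu (t - x); have := hw (t - x); have := hv (t - x)
    rw [mem_range'_1] at hx
    simp only [mem_append, not_or]
    grind

theorem range'_add_two (s n : ℕ) : range' s (n + 2) = [s] ++ range' (s + 1) n ++ [s + n + 1] := by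
  rw [range'_succ, range'_1_concat, singleton_append, cons_append, Nat.add_right_comm]

theorem filter_range'_not_mem_endpoints {t a p : ℕ} (hp : 1 ≤ p) (hap : a + p ≤ t) :
    (range' (t - (a + p)) (p + 1)).filter (fun x => t - x ∉ [a, a + p]) =
      listA' p (t - (a + p)) := by
  obtain ⟨b, rfl⟩ := Nat.exists_eq_add_of_le' hap
  have hsplit : range' b (p + 1) = [b] ++ range' (b + 1) (p - 1) ++ [b + p] := by
    rw [show p + 1 = p - 1 + 2 by omega, range'_add_two, show b + (p - 1) + 1 = b + p by omega]
  have hmid : (range' (b + 1) (p - 1)).filter (fun x => b + (a + p) - x ∉ [a, a + p]) =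
      range' (b + 1) (p - 1) :=
    filter_eq_self.2 fun x hx => decide_eq_true <| by
      simp only [mem_range'_1] at hx
      simp only [mem_cons, not_mem_nil, or_false, not_or]
      omega
  rw [Nat.add_sub_cancel, hsplit, filter_append, filter_append, hmid, listA',
    ← range'_eq_map_range]
  simp only [filter_cons, filter_nil, mem_cons, not_mem_nil, or_false, not_or, decide_eq_true_eq]
  split_ifs <;> first | omega | simp

theorem filter_range'_not_mem_inner_pair {t a p : ℕ} (hp : 3 ≤ p) (hap : a + p ≤ t) :
    (range' (t - (a + p)) (p + 1)).filter (fun x => t - x ∉ [a + 1, a + p - 1]) =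
      listA p (t - (a + p)) := by
  obtain ⟨b, rfl⟩ := Nat.exists_eq_add_of_le' hap
  have hsplit : range' b (p + 1) =
      [b, b + 1] ++ range' (b + 2) (p - 3) ++ [b + p - 1, b + p] := by
    rw [show p + 1 = p - 3 + 2 + 2 by omega, range'_add_two, range'_add_two,
      show b + 1 + (p - 3) + 1 = b + p - 1 by omega, show b + (p - 3 + 2) + 1 = b + p by omega]
    simp
  have hmid : (range' (b + 2) (p - 3)).filter (fun x => b + (a + p) - x ∉ [a + 1, a + p - 1]) =
      range' (b + 2) (p - 3) :=
    filter_eq_self.2 fun x hx => decide_eq_true <| by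
      simp only [mem_range'_1] at hx
      simp only [mem_cons, not_mem_nil, or_false, not_or]
      omega
  rw [Nat.add_sub_cancel, hsplit, filter_append, filter_append, hmid, listA,
    ← range'_eq_map_range]
  simp only [filter_cons, filter_nil, mem_cons, not_mem_nil, or_false, not_or, decide_eq_true_eq]
  split_ifs <;> first | omega | simp

theorem stmt5_general (r m t p : ℕ) (hp : 4 ≤ p) (l l' : List ℕ)
    (hl : l ∈ TT r m) (hP : PairP p l l')
    (ht : ∀ x ∈ l, x ≤ t) :
    ∃ b u v, complA t l' = u ++ listA p b ++ v ∧
      complA t l = u ++ listA' p b ++ v := by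
  obtain ⟨a, u, v, rfl, rfl⟩ := hP
  obtain ⟨hu, hv⟩ := hl.2.1.bounds_of_append_pair
  have hap : a + p ≤ t := ht (a + p) (by simp)
  have hw : ∀ x ∈ [a, a + p], a ≤ x ∧ x ≤ a + p := by simp
  have hw' : ∀ x ∈ [a + 1, a + p - 1], a ≤ x ∧ x ≤ a + p := by
    simp only [mem_cons, not_mem_nil, or_false, forall_eq_or_imp, forall_eq]
    omega
  rw [complA_append_append hap hu hw' hv, complA_append_append hap hu hw hv,
    filter_range'_not_mem_inner_pair (by omega) hap, filter_range'_not_mem_endpoints (by omega) hap]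
  exact ⟨_, _, _, rfl, rfl⟩

theorem stmt5 (r m t p : ℕ) (hp : 4 ≤ p) (l l' : List ℕ)
    (hl : l ∈ TT r m) (hl' : l' ∈ TT r m) (hP : PairP p l l')
    (ht : ∀ x ∈ l, x ≤ t) (ht' : ∀ x ∈ l', x ≤ t) :
    ∃ b u v, complA t l' = u ++ listA p b ++ v ∧
      complA t l = u ++ listA' p b ++ v :=
  stmt5_general r m t p hp l l' hl hP ht
end

section
/- Let (a_*, a'_*) ∈ 𝔗_r^m × 𝔗_r^m with (a_k, a_{k+1}) = (a, a+3), (a'_k, a'_{k+1}) = (a+1, a+2), and a_s = a'_s for s ≠ k, k+1. Define the pair to be 'induced' if there exists k₀ ∈ {1,...,r} such that subtracting 1 from the last k₀ entries of both a_* and a'_* yields elements of 𝔗_{r-k₀}^m (in particular the resulting sequences are still strictly increasing sequences of natural numbers). Then at least one of the following holds: (i) (a_*, a'_*) is induced; (ii) for t sufficiently large, (a'_*^{!t}, a_*^{!t}) is induced; (iii) (a_*, a'_*) is equivalent to ((0,3),(1,2)) under the relation generated by prepending 0 and incrementing all entries by 1 simultaneously in both sequences. -/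
/-!
A list in `TT r m` may be lowered by one on its last `k` entries (staying in `TT (r - k) m`) as
soon as the first of these entries is positive and exceeds every earlier entry by at least two.
A gap of this kind in front of the pattern `a, a + 3` / `a + 1, a + 2`, at it, or behind it is
shared by both lists and makes the pair induced. Otherwise the pair is
`0, …, a - 1, a, a + 3, a + 4, …, a + K + 3` and `0, …, a - 1, a + 1, a + 2, a + 4, …, a + K + 3`.
For `K = 0` this is a shift of `((0, 3), (1, 2))`; for `K > 0` the complements in `{0, …, t}` are
`0, …, N - 1, N + K + 1, N + K + 2` and `0, …, N - 1, N + K, N + K + 3`, a pair of the same shape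
with a gap at the pattern, hence induced.
-/

namespace List

theorem sum_range'_le_sum_of_pairwise_lt :
    ∀ {l : List ℕ} {s : ℕ}, l.Pairwise (· < ·) → (∀ b ∈ l, s ≤ b) →
      (range' s l.length).sum ≤ l.sum
  | [], _, _, _ => by simp
  | b :: l, s, hl, hs => by
    obtain ⟨hbl, hl⟩ := pairwise_cons.mp hl
    have hsb := hs b mem_cons_self
    have := sum_range'_le_sum_of_pairwise_lt (s := s + 1) hl fun e he => (hsb.trans_lt (hbl e he))
    simp only [length_cons, range'_succ, sum_cons]
    omega

theorem sum_range_le_sum_of_pairwise_lt {l : List ℕ} (hl : l.Pairwise (· < ·)) :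
    (range l.length).sum ≤ l.sum := by
  simpa [range_eq_range'] using sum_range'_le_sum_of_pairwise_lt (s := 0) hl (by simp)

theorem sum_map_sub_one_add_length :
    ∀ {l : List ℕ}, (∀ b ∈ l, 1 ≤ b) → (l.map (· - 1)).sum + l.length = l.sum
  | [], _ => by simp
  | b :: l, hl => by
    have := sum_map_sub_one_add_length fun e he => hl e (mem_cons_of_mem b he)
    have := hl b mem_cons_self
    simp only [map_cons, sum_cons, length_cons]
    omega

theorem eq_range'_or_exists_gap :
    ∀ {w : List ℕ} {s : ℕ}, w.Pairwise (· < ·) → (∀ b ∈ w, s ≤ b) →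
      w = range' s w.length ∨ ∃ x h t, w = x ++ h :: t ∧ s < h ∧ ∀ b ∈ x, b + 2 ≤ h
  | [], _, _, _ => by simp
  | b :: w, s, hw, hs => by
    obtain ⟨hbw, hw'⟩ := pairwise_cons.mp hw
    obtain hsb | rfl := (hs b mem_cons_self).lt_or_eq
    · exact .inr ⟨[], b, w, rfl, hsb, by simp⟩
    rcases eq_range'_or_exists_gap (s := s + 1) hw' hbw with hrange | ⟨x, h, t, rfl, hsh, hgap⟩
    · exact .inl (by rw [length_cons, range'_succ, ← hrange])
    · exact .inr ⟨s :: x, h, t, rfl, by omega, forall_mem_cons.mpr ⟨hsh, hgap⟩⟩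

theorem sum_range_id (m : ℕ) : (range m).sum = m * (m - 1) / 2 := by
  simp [range_eq_range', sum_range']

end List

open List

theorem decLast_append (x y : List ℕ) : decLast y.length (x ++ y) = x ++ y.map (· - 1) := by
  simp [decLast]

theorem decLast_mem_TT {r m : ℕ} {x y : List ℕ} (hl : x ++ y ∈ TT r m)
    (hy : ∀ c ∈ y, 1 ≤ c) (hxy : ∀ b ∈ x, ∀ c ∈ y, b + 2 ≤ c) :
    y.length ≤ r ∧ decLast y.length (x ++ y) ∈ TT (r - y.length) m := by
  obtain ⟨hlen, hpw, hsum⟩ := hl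
  obtain ⟨hx, hy', -⟩ := pairwise_append.mp hpw
  have hpw' : (x ++ y.map (· - 1)).Pairwise (· < ·) := by
    refine pairwise_append.mpr ⟨hx, pairwise_map.mpr (hy'.imp_of_mem ?_), ?_⟩
    · intro b c hb _ hbc
      have := hy b hb
      omega
    · simp only [mem_map]
      rintro b hb _ ⟨c, hc, rfl⟩
      have := hxy b hb c hc
      omega
  have hlen' : (x ++ y.map (· - 1)).length = m := by simpa using hlen
  have hlow := sum_range_le_sum_of_pairwise_lt hpw'
  have hdrop := sum_map_sub_one_add_length hy
  rw [hlen'] at hlow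
  rw [← sum_range_id, sum_append] at hsum
  rw [sum_append] at hlow
  rw [decLast_append]
  refine ⟨by omega, hlen', hpw', ?_⟩
  rw [← sum_range_id, sum_append]
  omega

theorem decLast_mem_TT_of_gap {r m h : ℕ} {x t : List ℕ} (hl : x ++ h :: t ∈ TT r m)
    (hh : 1 ≤ h) (hx : ∀ b ∈ x, b + 2 ≤ h) :
    t.length + 1 ≤ r ∧ decLast (t.length + 1) (x ++ h :: t) ∈ TT (r - (t.length + 1)) m := by
  have hht : ∀ c ∈ h :: t, h ≤ c := by
    have := (pairwise_append.mp hl.2.1).2.1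
    simpa using fun c hc => ((pairwise_cons.mp this).1 c hc).le
  exact decLast_mem_TT hl (fun c hc => hh.trans (hht c hc))
    fun b hb c hc => (hx b hb).trans (hht c hc)

theorem inducedT_of_gap {r m h h' : ℕ} {x x' t t' : List ℕ}
    (hl : x ++ h :: t ∈ TT r m) (hl' : x' ++ h' :: t' ∈ TT r m) (ht : t.length = t'.length)
    (hh : 1 ≤ h) (hx : ∀ b ∈ x, b + 2 ≤ h) (hh' : 1 ≤ h')
    (hx' : ∀ b ∈ x', b + 2 ≤ h') :
    InducedT r (x ++ h :: t) (x' ++ h' :: t') := by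
  obtain ⟨hk, hdec⟩ := decLast_mem_TT_of_gap hl hh hx
  obtain ⟨-, hdec'⟩ := decLast_mem_TT_of_gap hl' hh' hx'
  rw [← ht] at hdec'
  exact ⟨t.length + 1, by omega, hk, hl.1 ▸ hdec, hl'.1 ▸ hdec'⟩

theorem inducedT_or_staircase {r m a : ℕ} {u v : List ℕ}
    (hl : u ++ [a, a + 3] ++ v ∈ TT r m) (hl' : u ++ [a + 1, a + 2] ++ v ∈ TT r m) :
    InducedT r (u ++ [a, a + 3] ++ v) (u ++ [a + 1, a + 2] ++ v) ∨
      u = range a ∧ ∃ K, v = range' (a + 4) K := by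
  obtain ⟨hua, hv, hcross⟩ := pairwise_append.mp hl.2.1
  obtain ⟨hu, -, hlt⟩ := pairwise_append.mp hua
  rcases eq_range'_or_exists_gap hu (s := 0) (by simp) with hu_eq | ⟨x, h, t, rfl, hh, hx⟩
  swap
  · left
    simpa using inducedT_of_gap (t := t ++ [a, a + 3] ++ v) (t' := t ++ [a + 1, a + 2] ++ v)
      (by simpa using hl) (by simpa using hl') (by simp) hh hx hh hx
  have hu_lt : ∀ b ∈ u, b < u.length := by
    intro b hb
    rw [hu_eq] at hb
    simpa using hb
  have hca : u.length ≤ a := by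
    simpa using (hu.nodup.subperm fun b hb => mem_range.mpr (hlt b hb a (by simp))).length_le
  obtain hca | rfl := hca.lt_or_eq
  · left
    simpa using inducedT_of_gap (x := u) (t := (a + 3) :: v) (t' := (a + 2) :: v)
      (by simpa using hl) (by simpa using hl') (by simp) (by omega)
      (fun b hb => by have := hu_lt b hb; omega) (by omega)
      (fun b hb => by have := hu_lt b hb; omega)
  rcases eq_range'_or_exists_gap hv (s := u.length + 4)
      (fun e he => hcross _ (by simp) e he) with hv_eq | ⟨x, h, t, rfl, hh, hx⟩
  · exact .inr ⟨by rw [range_eq_range']; exact hu_eq, _, hv_eq⟩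
  left
  have hprefix : ∀ p q, p ≤ u.length + 3 → q ≤ u.length + 3 →
      ∀ b ∈ u ++ [p, q] ++ x, b + 2 ≤ h := by
    intro p q hp hq b hb
    simp only [mem_append, mem_cons, not_mem_nil, or_false] at hb
    rcases hb with (hb | rfl | rfl) | hb
    · have := hu_lt b hb; omega
    all_goals first | omega | exact hx b hb
  simpa using inducedT_of_gap (x := u ++ [u.length, u.length + 3] ++ x)
    (x' := u ++ [u.length + 1, u.length + 2] ++ x) (t := t) (t' := t)
    (by simpa using hl) (by simpa using hl') rfl (by omega) (hprefix _ _ (by omega) (by omega))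
    (by omega) (hprefix _ _ (by omega) (by omega))

theorem sum_range_append_pair_append_range' (c p q d K : ℕ) :
    (range c ++ [p, q] ++ range' (c + d) K).sum + (2 * c + 1 + 2 * K) =
      (range (c + 2 + K)).sum + p + q + K * d := by
  rw [range_eq_range', range_eq_range', ← range'_append_1, ← range'_append_1]
  simp only [sum_append, sum_range', sum_cons, sum_nil, range'_succ, range'_zero]
  ring_nf

theorem complA_eq_of_mem_iff {t : ℕ} {l L : List ℕ} (hL : L.Pairwise (· < ·))
    (hmem : ∀ y, y ∈ L ↔ y ≤ t ∧ t - y ∉ l) : complA t l = L :=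
  ((pairwise_lt_range (n := t + 1)).filter _).eq_of_mem_iff hL fun y => by
    simp [hmem]

theorem pairwise_lt_range_append_pair {N p q : ℕ} (hp : N ≤ p) (hpq : p < q) :
    (range N ++ [p, q]).Pairwise (· < ·) := by
  refine pairwise_append.mpr ⟨pairwise_lt_range, by simpa using hpq, ?_⟩
  simp only [mem_range, mem_cons, not_mem_nil, or_false]
  omega

theorem range_append_pair_mem_TT {r N p q : ℕ} (hp : N ≤ p) (hpq : p < q)
    (hr : p + q = r + 2 * N + 1) : range N ++ [p, q] ∈ TT r (N + 2) := by
  refine ⟨by simp, pairwise_lt_range_append_pair hp hpq, ?_⟩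
  have := sum_range_append_pair_append_range' N p q 0 0
  simp only [add_zero, range'_zero, append_nil, mul_zero] at this
  rw [← sum_range_id]
  omega

theorem eq_two_mul_add_two_of_mem_TT {r m a K : ℕ}
    (hl : range a ++ [a, a + 3] ++ range' (a + 4) K ∈ TT r m) : r = 2 * K + 2 := by
  obtain ⟨hlen, -, hsum⟩ := hl
  have := sum_range_append_pair_append_range' a a (a + 3) 4 K
  have hm : m = a + 2 + K := by
    simp only [length_append, length_range, length_cons, length_nil, length_range'] at hlen
    omega
  rw [← sum_range_id, hm] at hsum
  omega

theorem complA_staircase (N a K : ℕ) :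
    complA (N + a + K + 3) (range a ++ [a + 1, a + 2] ++ range' (a + 4) K) =
        range N ++ [N + K, N + K + 3] ∧
      complA (N + a + K + 3) (range a ++ [a, a + 3] ++ range' (a + 4) K) =
        range N ++ [N + K + 1, N + K + 2] := by
  constructor <;>
  · refine complA_eq_of_mem_iff (pairwise_lt_range_append_pair (by omega) (by omega)) fun y => ?_
    simp only [mem_append, mem_range, mem_cons, not_mem_nil, or_false, mem_range'_1]
    omega

theorem shA_iterate (n : ℕ) (l : List ℕ) : shA^[n] l = range n ++ l.map (n + ·) := by
  induction n with
  | zero => simp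
  | succ n ih =>
    rw [Function.iterate_succ_apply', ih, range_succ_eq_map]
    simp [shA, Function.comp_def, Nat.add_right_comm _ 1]

theorem stmt7 (r m : ℕ) (l l' : List ℕ)
    (hl : l ∈ TT r m) (hl' : l' ∈ TT r m) (hP : PairP 3 l l') :
    InducedT r l l' ∨
    (∃ T, ∀ t, T ≤ t → InducedT r (complA t l') (complA t l)) ∨
    PairEquivA (l, l') ([0, 3], [1, 2]) := by
  obtain ⟨a, u, v, rfl, rfl⟩ := hP
  rw [show a + 3 - 1 = a + 2 from rfl] at hl' ⊢
  rcases inducedT_or_staircase hl hl' with hind | ⟨rfl, K, rfl⟩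
  · exact .inl hind
  obtain rfl | hK := K.eq_zero_or_pos
  · exact .inr <| .inr ⟨0, a, by simp [shA_iterate], by simp [shA_iterate]⟩
  refine .inr <| .inl ⟨a + K + 3, fun t ht => ?_⟩
  obtain ⟨N, rfl⟩ : ∃ N, t = N + a + K + 3 := ⟨t - (a + K + 3), by omega⟩
  obtain ⟨hcompl', hcompl⟩ := complA_staircase N a K
  have hmem : range N ++ [N + K, N + K + 3] ∈ TT (2 * K + 2) (N + 2) :=
    range_append_pair_mem_TT (by omega) (by omega) (by omega)
  have hmem' : range N ++ [N + K + 1, N + K + 2] ∈ TT (2 * K + 2) (N + 2) :=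
    range_append_pair_mem_TT (by omega) (by omega) (by omega)
  rw [eq_two_mul_add_two_of_mem_TT hl, hcompl', hcompl]
  rcases inducedT_or_staircase (u := range N) (v := []) (by simpa using hmem)
    (by simpa using hmem') with hind | ⟨hN, -⟩
  · simpa using hind
  · have := congrArg length hN
    simp only [length_range] at this
    omega
end

section
/- Let p ≥ 3 and suppose (a_*, a'_*) ∈ 𝔖_r^M × 𝔖_r^M satisfies: for some k and some a, (a_k, a_{k+1}) = (a, a+p), (a'_k, a'_{k+1}) = (a+1, a+p-1), and a_s = a'_s for s ≠ k, k+1. Then (a_*, a'_*) is induced: there exists k₀ ∈ {1,...,r} such that decreasing the last k₀ entries of both sequences by 1 yields elements of 𝔖_{r-k₀}^M. -/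
/-! Decrease every entry from the `(k+1)`-st one on, i.e. take `k₀ = M - k`. The window
`(a, a+p)` resp. `(a+1, a+p-1)` leaves a gap in front of the decreased block, so both sequences
stay weakly increasing with every value taken at most twice; the only value that can reach
multiplicity two at the junction is `a+1` when `p = 3`, and it occurs once on each side.
Both sums drop by `k₀`, and `k₀ ≤ r` because a sorted length-`M` sequence with every value
taken at most twice has sum at least `∑_{j<M} ⌊j/2⌋ = (M² - 2M + ε)/4`, and the decreased
sequences are still of this kind. -/

def SortedAtMostTwice (l : List ℕ) : Prop :=
  l.Pairwise (· ≤ ·) ∧ ∀ x, l.count x ≤ 2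

def minSum (n : ℕ) : ℕ := ∑ j ∈ Finset.range n, j / 2

lemma minSum_add_two (n : ℕ) : minSum (n + 2) = minSum n + n := by
  simp only [minSum, Finset.sum_range_succ]
  omega

lemma four_mul_minSum_add (n : ℕ) : 4 * minSum n + 2 * n = n ^ 2 + n % 2 := by
  induction n using Nat.twoStepInduction with
  | zero => simp [minSum]
  | one => simp [minSum]
  | more n ih _ =>
    rw [minSum_add_two]
    have : (n + 2) ^ 2 = n ^ 2 + 4 * n + 4 := by ring
    omega

lemma SS_offset_eq_minSum {M ε : ℕ} (hM : M % 2 = ε) : (M ^ 2 - 2 * M + ε) / 4 = minSum M := by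
  have := four_mul_minSum_add M
  omega

lemma count_map_pred {t : List ℕ} (hpos : ∀ y ∈ t, 0 < y) (x : ℕ) :
    (t.map (· - 1)).count x = t.count (x + 1) := by
  induction t with
  | nil => rfl
  | cons e t ih =>
    have he := hpos e (by simp)
    rw [List.map_cons, List.count_cons, List.count_cons, ih fun y hy => hpos y (by simp [hy])]
    simp only [beq_iff_eq]
    split_ifs <;> omega

lemma sum_map_pred_add_length {t : List ℕ} (hpos : ∀ y ∈ t, 0 < y) :
    (t.map (· - 1)).sum + t.length = t.sum := by
  induction t with
  | nil => rfl
  | cons e t ih =>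
    have he := hpos e (by simp)
    have := ih fun y hy => hpos y (by simp [hy])
    simp only [List.map_cons, List.sum_cons, List.length_cons]
    omega

lemma decLast_length_append (s t : List ℕ) :
    decLast t.length (s ++ t) = s ++ t.map (· - 1) := by
  simp [decLast]

namespace SortedAtMostTwice

lemma sublist {l l' : List ℕ} (h : SortedAtMostTwice l') (hl : l.Sublist l') :
    SortedAtMostTwice l :=
  ⟨h.1.sublist hl, fun x => (hl.count_le x).trans (h.2 x)⟩

lemma lt_of_mem_cons_cons {x y e : ℕ} {t : List ℕ} (h : SortedAtMostTwice (x :: y :: t))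
    (he : e ∈ t) : x < e := by
  obtain ⟨hsort, hcount⟩ := h
  simp only [List.pairwise_cons, List.mem_cons] at hsort
  have hxy := hsort.1 y (Or.inl rfl)
  have hxe := hsort.1 e (Or.inr he)
  have hye := hsort.2.1 e he
  by_contra! hex
  have hcount_t : 0 < t.count x := List.count_pos_iff.2 (by rwa [show x = e by omega])
  have := hcount x
  simp only [List.count_cons, beq_iff_eq, show y = x by omega, if_true] at this
  omega

lemma append_map_pred {s t : List ℕ} (h : SortedAtMostTwice (s ++ t))
    (hlt : ∀ x ∈ s, ∀ y ∈ t, x < y) (hpos : ∀ y ∈ t, 0 < y)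
    (hjunc : ∀ x ∈ s, x + 1 ∈ t → s.count x + t.count (x + 1) ≤ 2) :
    SortedAtMostTwice (s ++ t.map (· - 1)) := by
  obtain ⟨hsort, hcount⟩ := h
  rw [List.pairwise_append] at hsort
  refine ⟨List.pairwise_append.2
    ⟨hsort.1, hsort.2.1.map _ fun _ _ => (Nat.sub_le_sub_right · 1), ?_⟩, fun x => ?_⟩
  · simp only [List.mem_map]
    rintro x hx _ ⟨y, hy, rfl⟩
    have := hlt x hx y hy
    omega
  · rw [List.count_append, count_map_pred hpos]
    by_cases hx : x ∈ s
    · by_cases hx1 : x + 1 ∈ t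
      · exact hjunc x hx hx1
      · rw [List.count_eq_zero.2 hx1]
        exact ((List.sublist_append_left s t).count_le x).trans (hcount x)
    · rw [List.count_eq_zero.2 hx, zero_add]
      exact ((List.sublist_append_right s t).count_le (x + 1)).trans (hcount (x + 1))

lemma minSum_length_le_sum : ∀ {l : List ℕ}, SortedAtMostTwice l → minSum l.length ≤ l.sum
  | [], _ => le_rfl
  | [_], _ => by simp [minSum]
  | x :: y :: t, h => by
    have hpos : ∀ e ∈ t, 0 < e := fun e he => (h.lt_of_mem_cons_cons he).trans_le' x.zero_le
    have ht : SortedAtMostTwice (t.map (· - 1)) := by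
      simpa using (h.sublist ((t.sublist_cons_self y).trans (List.sublist_cons_self x _))
        |>.append_map_pred (s := []) (by simp) hpos (by simp))
    have ih := ht.minSum_length_le_sum
    have hsum := sum_map_pred_add_length hpos
    simp only [List.length_map] at ih
    simp only [List.length_cons, List.sum_cons, minSum_add_two]
    omega
termination_by l => l.length

end SortedAtMostTwice

lemma mem_SS_sub_of_sum_add {r M ε k : ℕ} {w w' : List ℕ} (hM : M % 2 = ε)
    (hw : w ∈ SS r M ε) (h' : SortedAtMostTwice w') (hlen : w'.length = M)
    (hsum : w'.sum + k = w.sum) : k ≤ r ∧ w' ∈ SS (r - k) M ε := by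
  have hmin := h'.minSum_length_le_sum
  rw [hlen] at hmin
  have hwsum := hw.2.2.2
  rw [SS_offset_eq_minSum hM] at hwsum
  refine ⟨by omega, hlen, h'.1, h'.2, ?_⟩
  rw [SS_offset_eq_minSum hM]
  omega

lemma bounds_of_pairwise_le {u v : List ℕ} {b c : ℕ}
    (h : (u ++ [b, c] ++ v).Pairwise (· ≤ ·)) :
    (∀ x ∈ u, x ≤ b) ∧ ∀ y ∈ v, c ≤ y := by
  simp only [List.pairwise_append, List.mem_append, List.mem_cons] at h
  exact ⟨fun x hx => h.1.2.2 x hx b (by simp), fun y hy => h.2.2 c (by simp) y hy⟩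

/-- `hv` has to come from the sequence with window `(a, a+p)`: for `p = 3` the other one alone
does not keep `a + 2` out of `v`. -/
lemma decLast_mem_SS_of_window {r M ε p a b c : ℕ} {u v : List ℕ} (hM : M % 2 = ε)
    (hp : 3 ≤ p) (hu : ∀ x ∈ u, x ≤ a) (hv : ∀ y ∈ v, a + p ≤ y) (hb : b ≤ a + 1)
    (hc : a + p - 1 ≤ c) (hw : u ++ [b, c] ++ v ∈ SS r M ε) :
    v.length + 1 ≤ r ∧
      decLast (v.length + 1) (u ++ [b, c] ++ v) ∈ SS (r - (v.length + 1)) M ε := by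
  have hsplit : u ++ [b, c] ++ v = (u ++ [b]) ++ (c :: v) := by simp
  rw [hsplit] at hw ⊢
  have hpos : ∀ y ∈ c :: v, 0 < y := by
    rintro y (_ | ⟨_, hy⟩)
    · omega
    · have := hv y hy
      omega
  have hle : ∀ x ∈ u ++ [b], x ≤ a + 1 := by
    simp only [List.mem_append, List.mem_singleton]
    rintro x (hx | rfl)
    · exact (hu x hx).trans (Nat.le_succ a)
    · exact hb
  have hlt : ∀ x ∈ u ++ [b], ∀ y ∈ c :: v, x < y := by
    rintro x hx y (_ | ⟨_, hy⟩)
    · have := hle x hx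
      omega
    · have := hle x hx
      have := hv y hy
      omega
  have hjunc : ∀ x ∈ u ++ [b], x + 1 ∈ c :: v →
      (u ++ [b]).count x + (c :: v).count (x + 1) ≤ 2 := by
    intro x hx hx1
    have hxa := hle x hx
    have hxv : x + 1 ∉ v := fun h => by have := hv _ h; omega
    simp only [List.mem_cons, hxv, or_false] at hx1
    have hxu : x ∉ u := fun h => by have := hu _ h; omega
    rw [List.count_append, List.count_cons, List.count_cons, List.count_eq_zero.2 hxu,
      List.count_eq_zero.2 hxv]
    simp only [List.count_nil, beq_iff_eq]
    split_ifs <;> omega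
  have hadm : SortedAtMostTwice _ :=
    SortedAtMostTwice.append_map_pred ⟨hw.2.1, hw.2.2.1⟩ hlt hpos hjunc
  rw [show v.length + 1 = (c :: v).length from rfl, decLast_length_append]
  refine mem_SS_sub_of_sum_add hM hw hadm (by simpa using hw.1) ?_
  rw [List.sum_append, List.sum_append (l₁ := u ++ [b]), ← sum_map_pred_add_length hpos]
  omega

theorem stmt9 (r M p ε : ℕ) (hp : 3 ≤ p) (hε : ε ≤ 1) (hM : ∃ n, M = ε + 2 * n)
    (l l' : List ℕ) (hl : l ∈ SS r M ε) (hl' : l' ∈ SS r M ε) (hP : PairP p l l') :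
    InducedS r ε l l' := by
  obtain ⟨a, u, v, rfl, rfl⟩ := hP
  have hMε : M % 2 = ε := by
    obtain ⟨n, rfl⟩ := hM
    omega
  obtain ⟨hu, hv⟩ := bounds_of_pairwise_le hl.2.1
  obtain ⟨hr, hdec⟩ := decLast_mem_SS_of_window hMε hp hu hv (Nat.le_succ a)
    (Nat.sub_le _ _) hl
  obtain ⟨-, hdec'⟩ := decLast_mem_SS_of_window hMε hp hu hv le_rfl le_rfl hl'
  exact ⟨v.length + 1, Nat.succ_pos _, hr, hl.1 ▸ hdec, hl'.1 ▸ hdec'⟩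
end

section
/- Let a_* ∈ 𝔖_r^M and let ã_* = (0, 0, a₁+1, a₂+1, ..., a_M+1) ∈ 𝔖_r^{M+2}. Then for t ≥ a_M, ã_*^{!(t+1)} = a_*^{!t}; consequently the operation a_* ↦ a_*^{!t} induces a well-defined involution ξ ↦ ξ^• on the set of equivalence classes ^ε𝔖_r. -/
/-! The shift `shS` adds one to every entry and prepends two zeros, so it raises the sum by `M`,
which is exactly how much the offset `(M² - 2M + ε)/4` grows when `M` becomes `M + 2`. In the
complement, the two new zeros use up both copies of `t + 1`, and every other value `x ≤ t` has
`t + 1 - x = (t - x) + 1`, whose multiplicity in `shS l` is that of `t - x` in `l`. -/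

lemma length_shS (l : List ℕ) : (shS l).length = l.length + 2 := by
  simp [shS]

lemma sum_shS (l : List ℕ) : (shS l).sum = l.sum + l.length := by
  simp [shS]

lemma count_shS_zero (l : List ℕ) : (shS l).count 0 = 2 := by
  simp [shS, List.count_eq_zero]

lemma count_shS_succ (l : List ℕ) (y : ℕ) : (shS l).count (y + 1) = l.count y := by
  simp [shS, List.count_map_of_injective _ _ (add_left_injective 1)]

lemma pairwise_le_shS {l : List ℕ} (hl : l.Pairwise (· ≤ ·)) : (shS l).Pairwise (· ≤ ·) := by
  simp only [shS, List.pairwise_cons, List.mem_cons, List.mem_map]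
  refine ⟨by omega, by omega, hl.map _ fun _ _ h => by omega⟩

lemma offset_add_self {M ε : ℕ} (hM : ∃ n, M = ε + 2 * n) :
    (M ^ 2 - 2 * M + ε) / 4 + M = ((M + 2) ^ 2 - 2 * (M + 2) + ε) / 4 := by
  obtain ⟨n, hn⟩ := hM
  match M with
  | 0 => simp
  | 1 =>
    obtain rfl : ε = 1 := by omega
    rfl
  | k + 2 =>
    have h₁ : (k + 2) ^ 2 - 2 * (k + 2) = (k + 2) * k := by
      rw [sq, ← Nat.sub_mul]; simp [mul_comm]
    have h₂ : (k + 2 + 2) ^ 2 - 2 * (k + 2 + 2) = (k + 2) * k + (k + 2) * 4 := by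
      rw [sq, ← Nat.sub_mul]; simp only [Nat.add_sub_cancel]; ring
    rw [h₁, h₂, Nat.add_right_comm, Nat.add_mul_div_right _ _ (by norm_num)]

lemma shS_mem_SS {r M ε : ℕ} (hM : ∃ n, M = ε + 2 * n) {l : List ℕ} (hl : l ∈ SS r M ε) :
    shS l ∈ SS r (M + 2) ε := by
  obtain ⟨hlen, hsort, hcount, hsum⟩ := hl
  refine ⟨by rw [length_shS, hlen], pairwise_le_shS hsort, ?_, ?_⟩
  · rintro (_ | y)
    · exact (count_shS_zero l).le
    · exact (count_shS_succ l y).trans_le (hcount y)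
  · rw [sum_shS, hsum, hlen, add_assoc, offset_add_self hM]

lemma complB_succ_shS (t : ℕ) (l : List ℕ) : complB (t + 1) (shS l) = complB t l := by
  rw [complB, List.range_succ, List.flatMap_append, List.flatMap_singleton, Nat.sub_self,
    count_shS_zero, Nat.sub_self, List.replicate_zero, List.append_nil, complB]
  refine List.flatMap_congr fun x hx => ?_
  rw [show t + 1 - x = t - x + 1 by simp at hx; omega, count_shS_succ]

theorem stmt11_general (r M t ε : ℕ) (hM : ∃ n, M = ε + 2 * n)
    (l : List ℕ) (hl : l ∈ SS r M ε) :
    shS l ∈ SS r (M + 2) ε ∧ complB (t + 1) (shS l) = complB t l :=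
  ⟨shS_mem_SS hM hl, complB_succ_shS t l⟩

theorem stmt11 (r M t ε : ℕ) (hε : ε ≤ 1) (hM : ∃ n, M = ε + 2 * n)
    (l : List ℕ) (hl : l ∈ SS r M ε) (ht : ∀ x ∈ l, x ≤ t) :
    shS l ∈ SS r (M + 2) ε ∧ complB (t + 1) (shS l) = complB t l :=
  stmt11_general r M t ε hM l hl
end

section
/- Let p ≥ 3 and suppose (a_*, a'_*) ∈ 𝔖_r^M × 𝔖_r^M satisfies (a_k, a_{k+1}) = (a, a+p), (a'_k, a'_{k+1}) = (a+1, a+p-1), a_s = a'_s for s ≠ k, k+1. Then for t ≥ max(a_M, a'_M), the complements (b_*, b'_*) = (a'_*^{!t}, a_*^{!t}) satisfy: there exist an index k' and a value b such that the entries of b_* at positions k' through k'+2p-4 are (b, b+1, b+2, b+2, b+3, b+3, ..., b+p-2, b+p-2, b+p-1, b+p), the entries of b'_* at those positions are (b+1, b+1, b+2, b+2, ..., b+p-2, b+p-2, b+p-1, b+p-1), and b_s = b'_s at all other positions. That is, the map (ξ, ξ') ↦ (ξ'^•, ξ^•) carries (^ε𝔖_r × ^ε𝔖_r)_p into (^ε𝔖_r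 × ^ε𝔖_r)'_p. -/
/-!
Complementing in the multiset `{0,0,1,1,…,t,t}` gives the value `x` multiplicity
`2 - count (t - x)`. Writing `l = u ++ [a, a+p] ++ v`, `l' = u ++ [a+1, a+p-1] ++ v` with
`u ≤ a` and `a + p ≤ v` (sortedness), the two lists have the same counts outside `[a, a+p]`, so
with `b = t - a - p` the complements agree outside the window `[b, b+p]`. Inside it, `l` misses
every value strictly between `a` and `a+p`, so its complement doubles `b+1, …, b+p-1`, while `l'`
hits `a+1` and `a+p-1` once each, so its complement has `b+1` and `b+p-1` once and `b` and `b+p`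
once more than that of `l`.
-/

def repBlock (f : ℕ → ℕ) (s n : ℕ) : List ℕ :=
  (List.range' s n).flatMap fun x => List.replicate (f x) x

section repBlock

variable (f : ℕ → ℕ) (s : ℕ)

theorem repBlock_add (m n : ℕ) :
    repBlock f s (m + n) = repBlock f s m ++ repBlock f (s + m) n := by
  rw [repBlock, repBlock, repBlock, ← List.range'_append_1, List.flatMap_append]

theorem repBlock_succ (n : ℕ) :
    repBlock f s (n + 1) = List.replicate (f s) s ++ repBlock f (s + 1) n := by
  rw [add_comm, repBlock_add]
  simp [repBlock]

theorem repBlock_succ' (n : ℕ) :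
    repBlock f s (n + 1) = repBlock f s n ++ List.replicate (f (s + n)) (s + n) := by
  rw [repBlock_add]
  simp [repBlock]

theorem repBlock_congr {g : ℕ → ℕ} {n : ℕ} (h : ∀ x, s ≤ x → x < s + n → f x = g x) :
    repBlock f s n = repBlock g s n :=
  List.flatMap_congr fun x hx => by
    rw [List.mem_range'_1] at hx
    rw [h x hx.1 hx.2]

theorem flatMap_range_pair (n : ℕ) :
    (List.range n).flatMap (fun i => [s + i, s + i]) = repBlock (fun _ => 2) s n := by
  rw [repBlock, List.range'_eq_map_range, List.flatMap_map]
  rfl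

end repBlock

def complMult (t : ℕ) (l : List ℕ) (x : ℕ) : ℕ := 2 - l.count (t - x)

theorem complB_eq_repBlock (t : ℕ) (l : List ℕ) :
    complB t l = repBlock (complMult t l) 0 (t + 1) := by
  rw [complB, repBlock, List.range_eq_range']
  rfl

theorem complB_eq_repBlock_append (b n a : ℕ) (l : List ℕ) :
    complB (b + n + a) l = repBlock (complMult (b + n + a) l) 0 b ++
      repBlock (complMult (b + n + a) l) b (n + 1) ++
        repBlock (complMult (b + n + a) l) (b + n + 1) a := by
  rw [complB_eq_repBlock, show b + n + a + 1 = b + (n + 1) + a by omega, repBlock_add,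
    repBlock_add]
  simp only [zero_add, add_assoc]

theorem repBlock_eq_listB' {f : ℕ → ℕ} {p b c d : ℕ} (hp : 1 ≤ p) (hlow : f b = c)
    (hmid : ∀ x, b < x → x < b + p → f x = 2) (htop : f (b + p) = d) :
    repBlock f b (p + 1) = List.replicate c b ++ listB' p b ++ List.replicate d (b + p) := by
  obtain ⟨q, rfl⟩ : ∃ q, p = q + 1 := ⟨p - 1, by omega⟩
  have hmid' : repBlock f (b + 1) q = listB' (q + 1) b := by
    rw [listB', Nat.add_sub_cancel, flatMap_range_pair]
    exact repBlock_congr _ _ fun x h1 h2 => hmid x (by omega) (by omega)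
  rw [repBlock_succ', repBlock_succ, hmid', hlow, htop, ← add_assoc]

theorem repBlock_eq_listB {f : ℕ → ℕ} {p b c d : ℕ} (hp : 3 ≤ p) (hlow : f b = c + 1)
    (hlow' : f (b + 1) = 1) (hmid : ∀ x, b + 1 < x → x < b + p - 1 → f x = 2)
    (htop' : f (b + p - 1) = 1) (htop : f (b + p) = d + 1) :
    repBlock f b (p + 1) = List.replicate c b ++ listB p b ++ List.replicate d (b + p) := by
  obtain ⟨q, rfl⟩ : ∃ q, p = q + 3 := ⟨p - 3, by omega⟩
  have hpred : b + (q + 3) - 1 = b + (q + 2) := by omega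
  have hmid' : repBlock f (b + 2) q = repBlock (fun _ => 2) (b + 2) q :=
    repBlock_congr _ _ fun x h1 h2 => hmid x (by omega) (by omega)
  have hsplit : repBlock f b (q + 3 + 1) =
      List.replicate (f b) b ++ List.replicate (f (b + 1)) (b + 1) ++ repBlock f (b + 2) q ++
        List.replicate (f (b + (q + 2))) (b + (q + 2)) ++
        List.replicate (f (b + (q + 3))) (b + (q + 3)) := by
    rw [repBlock_succ', repBlock_succ', repBlock_succ, repBlock_succ]
    simp only [List.append_assoc, add_assoc, Nat.reduceAdd]
  rw [hpred] at htop'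
  rw [hsplit, listB, Nat.add_sub_cancel, hpred, flatMap_range_pair, ← hmid', hlow, hlow', htop',
    htop, List.replicate_succ' (n := c), List.replicate_succ (n := d)]
  simp

section count

variable {u w v : List ℕ} {a c n : ℕ}

theorem count_append_append_of_lt (hv : ∀ z ∈ v, c ≤ z) (hn : n < c) :
    (u ++ w ++ v).count n = u.count n + w.count n := by
  rw [List.count_append, List.count_append,
    List.count_eq_zero.2 fun h => (hn.trans_le (hv n h)).false, Nat.add_zero]

theorem count_append_append_of_gt (hu : ∀ z ∈ u, z ≤ a) (hn : a < n) :
    (u ++ w ++ v).count n = w.count n + v.count n := by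
  rw [List.count_append, List.count_append,
    List.count_eq_zero.2 fun h => ((hu n h).trans_lt hn).false, Nat.zero_add]

theorem count_append_append_of_gt_of_lt (hu : ∀ z ∈ u, z ≤ a) (hv : ∀ z ∈ v, c ≤ z)
    (ha : a < n) (hc : n < c) : (u ++ w ++ v).count n = w.count n := by
  rw [count_append_append_of_gt hu ha, List.count_eq_zero.2 fun h => (hc.trans_le (hv n h)).false,
    Nat.add_zero]

end count

theorem bounds_of_pairwise_append_pair {u v : List ℕ} {a c : ℕ}
    (h : (u ++ [a, c] ++ v).Pairwise (· ≤ ·)) :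
    (∀ z ∈ u, z ≤ a) ∧ ∀ z ∈ v, c ≤ z := by
  rw [List.pairwise_append, List.pairwise_append] at h
  exact ⟨fun z hz => h.1.2.2 z hz a (by simp), fun z hz => h.2.2 c (by simp) z hz⟩

section window

variable {u v : List ℕ} {a p : ℕ}

theorem count_le_one_of_pattern (hp : 1 ≤ p) (hu : ∀ z ∈ u, z ≤ a) (hv : ∀ z ∈ v, a + p ≤ z)
    (hcnt : ∀ x, (u ++ [a, a + p] ++ v).count x ≤ 2) :
    u.count a ≤ 1 ∧ v.count (a + p) ≤ 1 := by
  have hlow := hcnt a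
  have htop := hcnt (a + p)
  rw [count_append_append_of_lt hv (by omega)] at hlow
  rw [count_append_append_of_gt hu (by omega)] at htop
  simp only [List.count_cons, List.count_nil, beq_iff_eq] at hlow htop
  split_ifs at hlow htop <;> omega

theorem complMult_pattern_of_lt_or_gt (hp : 1 ≤ p) {b x : ℕ} (hx : x ≤ b + p + a)
    (hout : x < b ∨ b + p < x) :
    complMult (b + p + a) (u ++ [a + 1, a + p - 1] ++ v) x =
      complMult (b + p + a) (u ++ [a, a + p] ++ v) x := by
  simp only [complMult, List.count_append, List.count_cons, List.count_nil, beq_iff_eq]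
  split_ifs <;> omega

variable (b : ℕ)

theorem repBlock_complMult_eq_listB' (hp : 1 ≤ p) (hu : ∀ z ∈ u, z ≤ a)
    (hv : ∀ z ∈ v, a + p ≤ z) :
    repBlock (complMult (b + p + a) (u ++ [a, a + p] ++ v)) b (p + 1) =
      List.replicate (1 - v.count (a + p)) b ++ listB' p b ++
        List.replicate (1 - u.count a) (b + p) := by
  apply repBlock_eq_listB' hp
  · rw [complMult, show b + p + a - b = a + p by omega, count_append_append_of_gt hu (by omega)]
    simp only [List.count_cons, List.count_nil, beq_iff_eq]
    split_ifs <;> omega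
  · intro x h1 h2
    rw [complMult, count_append_append_of_gt_of_lt hu hv (by omega) (by omega)]
    simp only [List.count_cons, List.count_nil, beq_iff_eq]
    split_ifs <;> omega
  · rw [complMult, show b + p + a - (b + p) = a by omega, count_append_append_of_lt hv (by omega)]
    simp only [List.count_cons, List.count_nil, beq_iff_eq]
    split_ifs <;> omega

theorem repBlock_complMult_eq_listB (hp : 3 ≤ p) (hu : ∀ z ∈ u, z ≤ a)
    (hv : ∀ z ∈ v, a + p ≤ z) (hcu : u.count a ≤ 1) (hcv : v.count (a + p) ≤ 1) :
    repBlock (complMult (b + p + a) (u ++ [a + 1, a + p - 1] ++ v)) b (p + 1) =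
      List.replicate (1 - v.count (a + p)) b ++ listB p b ++
        List.replicate (1 - u.count a) (b + p) := by
  apply repBlock_eq_listB hp
  · rw [complMult, show b + p + a - b = a + p by omega, count_append_append_of_gt hu (by omega)]
    simp only [List.count_cons, List.count_nil, beq_iff_eq]
    split_ifs <;> omega
  · rw [complMult, show b + p + a - (b + 1) = a + p - 1 by omega,
      count_append_append_of_gt_of_lt hu hv (by omega) (by omega)]
    simp only [List.count_cons, List.count_nil, beq_iff_eq]
    split_ifs <;> omega
  · intro x h1 h2
    rw [complMult, count_append_append_of_gt_of_lt hu hv (by omega) (by omega)]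
    simp only [List.count_cons, List.count_nil, beq_iff_eq]
    split_ifs <;> omega
  · rw [complMult, show b + p + a - (b + p - 1) = a + 1 by omega,
      count_append_append_of_gt_of_lt hu hv (by omega) (by omega)]
    simp only [List.count_cons, List.count_nil, beq_iff_eq]
    split_ifs <;> omega
  · rw [complMult, show b + p + a - (b + p) = a by omega, count_append_append_of_lt hv (by omega)]
    simp only [List.count_cons, List.count_nil, beq_iff_eq]
    split_ifs <;> omega

end window

theorem stmt12_general (r M t p ε : ℕ) (hp : 3 ≤ p)
    (l l' : List ℕ) (hl : l ∈ SS r M ε) (hP : PairP p l l')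
    (ht : ∀ x ∈ l, x ≤ t) :
    ∃ b u v, complB t l' = u ++ listB p b ++ v ∧
      complB t l = u ++ listB' p b ++ v := by
  obtain ⟨a, u, v, rfl, rfl⟩ := hP
  obtain ⟨-, hsort, hcnt, -⟩ := hl
  obtain ⟨hu, hv⟩ := bounds_of_pairwise_append_pair hsort
  obtain ⟨hcu, hcv⟩ := count_le_one_of_pattern (by omega) hu hv hcnt
  obtain ⟨b, rfl⟩ : ∃ b, t = b + p + a :=
    ⟨t - p - a, by have := ht (a + p) (by simp); omega⟩
  set g := complMult (b + p + a) (u ++ [a, a + p] ++ v)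
  refine ⟨b, repBlock g 0 b ++ List.replicate (1 - v.count (a + p)) b,
    List.replicate (1 - u.count a) (b + p) ++ repBlock g (b + p + 1) a, ?_, ?_⟩
  · rw [complB_eq_repBlock_append, repBlock_complMult_eq_listB b hp hu hv hcu hcv,
      repBlock_congr _ 0 fun x _ hx =>
        complMult_pattern_of_lt_or_gt (by omega) (by omega) (by omega),
      repBlock_congr _ (b + p + 1) fun x hx hx' =>
        complMult_pattern_of_lt_or_gt (by omega) (by omega) (by omega)]
    simp only [g, List.append_assoc]
  · rw [complB_eq_repBlock_append, repBlock_complMult_eq_listB' b (by omega) hu hv]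
    simp only [g, List.append_assoc]

theorem stmt12 (r M t p ε : ℕ) (hp : 3 ≤ p) (hε : ε ≤ 1) (hM : ∃ n, M = ε + 2 * n)
    (l l' : List ℕ) (hl : l ∈ SS r M ε) (hl' : l' ∈ SS r M ε) (hP : PairP p l l')
    (ht : ∀ x ∈ l, x ≤ t) (ht' : ∀ x ∈ l', x ≤ t) :
    ∃ b u v, complB t l' = u ++ listB p b ++ v ∧
      complB t l = u ++ listB' p b ++ v :=
  stmt12_general r M t p ε hp l l' hl hP ht
end

section
/- Suppose (a_*, a'_*) ∈ 𝔖_r^M × 𝔖_r^M satisfies (a_k, a_{k+1}) = (a, a+2), (a'_k, a'_{k+1}) = (a+1, a+1), a_s = a'_s for s ≠ k, k+1 (the case p = 2). Then for t ≥ max(a_M, a'_M), the pair (a'_*^{!t}, a_*^{!t}) is again of the same form: there exist an index k' and a value b with the entries of a'_*^{!t} at positions k', k'+1 equal to (b, b+2), the entries of a_*^{!t} at those positions equal to (b+1, b+1), and all other entries agreeing. -/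
/-!
Write `t = b + a + 2`, so that complementation in `{0,0,…,t,t}` sends the values `a, a+1, a+2`
to `b+2, b+1, b`. Outside this window `l` and `l'` have the same multiplicities, hence so do
their complements. Inside it, the bound "each value at most twice" forces `l'` to contain no
other `a+1` and `l` at most one other `a` and `a+2`; the complement of `l'` then has `b` and
`b+2` exactly once more than the complement of `l`, which instead has `b+1, b+1`.
-/

theorem List.count_append_append_eq {α : Type*} [BEq α] (u w v : List α) (y : α) :
    (u ++ w ++ v).count y = (u ++ v).count y + w.count y := by
  simp only [List.count_append]
  omega

def complBOn (t : ℕ) (l s : List ℕ) : List ℕ :=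
  s.flatMap fun x => List.replicate (2 - l.count (t - x)) x

theorem complB_eq_complBOn_append (b a : ℕ) (l : List ℕ) :
    complB (b + a + 2) l = complBOn (b + a + 2) l (List.range b) ++
      complBOn (b + a + 2) l [b, b + 1, b + 2] ++
      complBOn (b + a + 2) l ((List.range a).map (b + 3 + ·)) := by
  have hrange : List.range (b + a + 2 + 1) =
      List.range b ++ [b, b + 1, b + 2] ++ (List.range a).map (b + 3 + ·) := by
    rw [show b + a + 2 + 1 = b + 3 + a by omega, List.range_add, List.range_add]
    simp [List.range_succ]
  rw [complB, hrange, List.flatMap_append, List.flatMap_append]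
  rfl

theorem complBOn_append_middle_congr {t : ℕ} {u w w' v s : List ℕ}
    (h : ∀ x ∈ s, t - x ∉ w ∧ t - x ∉ w') :
    complBOn t (u ++ w ++ v) s = complBOn t (u ++ w' ++ v) s :=
  List.flatMap_congr fun x hx => by
    simp only [List.count_append_append_eq, List.count_eq_zero_of_not_mem (h x hx).1,
      List.count_eq_zero_of_not_mem (h x hx).2]

theorem PairP.append_append {p : ℕ} {l l' : List ℕ} (h : PairP p l l') (P S : List ℕ) :
    PairP p (P ++ l ++ S) (P ++ l' ++ S) := by
  obtain ⟨a, u, v, rfl, rfl⟩ := h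
  exact ⟨a, P ++ u, v ++ S, by simp, by simp⟩

theorem pairP_two_replicate (b m n : ℕ) :
    PairP 2 (List.replicate (m + 1) b ++ List.replicate (n + 1) (b + 2))
      (List.replicate m b ++ (b + 1) :: (b + 1) :: List.replicate n (b + 2)) :=
  ⟨b, List.replicate m b, List.replicate n (b + 2),
    by simp [List.replicate_succ' (n := m), List.replicate_succ (n := n)],
    by simp⟩

theorem pairP_two_complBOn_window (b a : ℕ) {u v : List ℕ} (h₀ : (u ++ v).count a ≤ 1)
    (h₁ : (u ++ v).count (a + 1) = 0) (h₂ : (u ++ v).count (a + 2) ≤ 1) :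
    PairP 2 (complBOn (b + a + 2) (u ++ [a + 1, a + 1] ++ v) [b, b + 1, b + 2])
      (complBOn (b + a + 2) (u ++ [a, a + 2] ++ v) [b, b + 1, b + 2]) := by
  simp only [complBOn, List.flatMap_cons, List.flatMap_nil, List.append_nil,
    List.count_append_append_eq, show b + a + 2 - b = a + 2 by omega,
    show b + a + 2 - (b + 1) = a + 1 by omega, show b + a + 2 - (b + 2) = a by omega]
  generalize (u ++ v).count a = c₀ at h₀ ⊢
  generalize (u ++ v).count (a + 2) = c₂ at h₂ ⊢
  simpa [h₁, show 2 - c₂ = 1 - c₂ + 1 by omega, show 2 - c₀ = 1 - c₀ + 1 by omega] using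
    pairP_two_replicate b (1 - c₂) (1 - c₀)

theorem stmt13_general (r M t ε : ℕ)
    (l l' : List ℕ) (hl : l ∈ SS r M ε) (hl' : l' ∈ SS r M ε) (hP : PairP 2 l l')
    (ht : ∀ x ∈ l, x ≤ t) :
    PairP 2 (complB t l') (complB t l) := by
  obtain ⟨a, u, v, rfl, rfl⟩ := hP
  rw [show a + 2 - 1 = a + 1 by omega] at hl' ⊢
  obtain ⟨b, rfl⟩ : ∃ b, t = b + a + 2 := ⟨t - (a + 2), by have := ht (a + 2) (by simp); omega⟩
  obtain ⟨-, -, hl, -⟩ := hl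
  obtain ⟨-, -, hl', -⟩ := hl'
  have hcount {w : List ℕ} (hw : ∀ x, (u ++ w ++ v).count x ≤ 2) (y : ℕ) :
      (u ++ v).count y + w.count y ≤ 2 :=
    List.count_append_append_eq u w v y ▸ hw y
  have h₀ : (u ++ v).count a ≤ 1 := by simpa [-List.count_append] using hcount hl a
  have h₁ : (u ++ v).count (a + 1) = 0 := by simpa [-List.count_append] using hcount hl' (a + 1)
  have h₂ : (u ++ v).count (a + 2) ≤ 1 := by simpa [-List.count_append] using hcount hl (a + 2)
  rw [complB_eq_complBOn_append, complB_eq_complBOn_append,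
    complBOn_append_middle_congr (s := List.range b) (w' := [a, a + 2]) ?_,
    complBOn_append_middle_congr (s := (List.range a).map _) (w' := [a, a + 2]) ?_]
  · exact (pairP_two_complBOn_window b a h₀ h₁ h₂).append_append _ _
  all_goals
    intro x hx
    simp only [List.mem_map, List.mem_range, List.mem_cons, List.not_mem_nil, or_false,
      or_self, not_or] at hx ⊢
    omega

theorem stmt13 (r M t ε : ℕ) (hε : ε ≤ 1) (hM : ∃ n, M = ε + 2 * n)
    (l l' : List ℕ) (hl : l ∈ SS r M ε) (hl' : l' ∈ SS r M ε) (hP : PairP 2 l l')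
    (ht : ∀ x ∈ l, x ≤ t) (ht' : ∀ x ∈ l', x ≤ t) :
    PairP 2 (complB t l') (complB t l) :=
  stmt13_general r M t ε l l' hl hl' hP ht
end
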